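/- Let ω(p) = 1/2 + (1/2)·√(p² + (1-p)²), let ℓ : ℝ → ℝ be any affine function, and let ε > 0. If p is chosen uniformly at random from [1/2, 1], then the probability that |ℓ(p) - ω(p)| ≤ ε is at most C·√ε for some absolute constant C (e.g., C = 16 suffices). Equivalently, the Lebesgue measure of {p ∈ [1/2, 1] : |ℓ(p) - ω(p)| ≤ ε} is at most C·√ε·(1/2). -/

import Mathlib

/-!
`√(p² + (1 - p)²)` is the Euclidean norm of `(p, 1 - p)`. On the unit ball the norm gains over
the triangle inequality: `‖a • u + b • v‖ ≤ a‖u‖ + b‖v‖ - ab (‖u‖‖v‖ - ⟪u, v⟫)`, and for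
`u = (x, 1 - x)`, `v = (y, 1 - y)` the Lagrange identity `‖u‖²‖v‖² - ⟪u, v⟫² = (x - y)²` bounds
the gain below by `ab (x - y)² / 2`. So the norm is `1`-strongly convex on `[0, 1]` and `ω` is
`1/2`-strongly convex. If an affine function is `ε`-close to `ω` at `p < q < r`, comparing the
chord at `q` with the strong convexity gap gives `(r - q)(q - p) ≤ 8ε`. Taking for `p` and `r`
the extreme points of the compact set where `ℓ` is `ε`-close to `ω`, every point of that set is
within `√(8ε)` of one of its ends, so its measure is at most `2√(8ε) ≤ 8√ε`.
-/

open Real MeasureTheory Set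
open scoped InnerProductSpace

lemma sq_sub_sq_le_two_mul_sub {A B : ℝ} (hAB : |A| ≤ B) (hB : B ≤ 1) :
    B ^ 2 - A ^ 2 ≤ 2 * (B - A) := by
  obtain ⟨hlow, hup⟩ := abs_le.1 hAB
  nlinarith [mul_nonneg (sub_nonneg.2 hup) (by linarith : 0 ≤ 2 - (B + A))]

lemma norm_smul_add_smul_le_sub_of_norm_le_one {E : Type*} [NormedAddCommGroup E]
    [InnerProductSpace ℝ E] {u v : E} (hu : ‖u‖ ≤ 1) (hv : ‖v‖ ≤ 1) {a b : ℝ}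
    (ha : 0 ≤ a) (hb : 0 ≤ b) (hab : a + b = 1) :
    ‖a • u + b • v‖ ≤ a * ‖u‖ + b * ‖v‖ - a * b * (‖u‖ * ‖v‖ - ⟪u, v⟫_ℝ) := by
  have htri : ‖a • u + b • v‖ ≤ a * ‖u‖ + b * ‖v‖ := by
    simpa [norm_smul, abs_of_nonneg ha, abs_of_nonneg hb] using norm_add_le (a • u) (b • v)
  have hle_one : a * ‖u‖ + b * ‖v‖ ≤ 1 := by nlinarith
  have hsq : (a * ‖u‖ + b * ‖v‖) ^ 2 - ‖a • u + b • v‖ ^ 2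
      = 2 * (a * b * (‖u‖ * ‖v‖ - ⟪u, v⟫_ℝ)) := by
    rw [norm_add_sq_real, norm_smul, norm_smul, real_inner_smul_left, real_inner_smul_right,
      Real.norm_of_nonneg ha, Real.norm_of_nonneg hb]
    ring
  linarith [sq_sub_sq_le_two_mul_sub ((abs_norm _).trans_le htri) hle_one]

lemma EuclideanSpace.sq_cross_le_two_mul_norm_mul_norm_sub_inner
    {u v : EuclideanSpace ℝ (Fin 2)} (hu : ‖u‖ ≤ 1) (hv : ‖v‖ ≤ 1) :
    (u 0 * v 1 - u 1 * v 0) ^ 2 ≤ 2 * (‖u‖ * ‖v‖ - ⟪u, v⟫_ℝ) := by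
  have hlagrange : (‖u‖ * ‖v‖) ^ 2 - ⟪u, v⟫_ℝ ^ 2 = (u 0 * v 1 - u 1 * v 0) ^ 2 := by
    rw [mul_pow, EuclideanSpace.real_norm_sq_eq, EuclideanSpace.real_norm_sq_eq]
    simp only [PiLp.inner_apply, Fin.sum_univ_two, RCLike.inner_apply, conj_trivial]
    ring
  rw [← hlagrange]
  exact sq_sub_sq_le_two_mul_sub (abs_real_inner_le_norm u v) (mul_le_one₀ hu (norm_nonneg v) hv)

theorem strongConvexOn_sqrt_sq_add_one_sub_sq :
    StrongConvexOn (Icc 0 1) 1 fun x : ℝ ↦ √(x ^ 2 + (1 - x) ^ 2) := by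
  let γ (x : ℝ) : EuclideanSpace ℝ (Fin 2) := !₂[x, 1 - x]
  have hnorm (x : ℝ) : ‖γ x‖ = √(x ^ 2 + (1 - x) ^ 2) := by
    simp [γ, EuclideanSpace.norm_eq, Fin.sum_univ_two]
  have hnorm_le {x : ℝ} (hx : x ∈ Icc 0 1) : ‖γ x‖ ≤ 1 := by
    rw [hnorm, sqrt_le_one]
    nlinarith [hx.1, hx.2]
  refine ⟨convex_Icc 0 1, fun x hx y hy a b ha hb hab ↦ ?_⟩
  have hcomb : a • γ x + b • γ y = γ (a • x + b • y) := by
    ext i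
    fin_cases i
    · simp [γ]
    · simp [γ]; linarith
  have hcross : γ x 0 * γ y 1 - γ x 1 * γ y 0 = x - y := by
    simp [γ]; ring
  have hgap := norm_smul_add_smul_le_sub_of_norm_le_one (hnorm_le hx) (hnorm_le hy) ha hb hab
  have hangle :=
    EuclideanSpace.sq_cross_le_two_mul_norm_mul_norm_sub_inner (hnorm_le hx) (hnorm_le hy)
  rw [hcomb, hnorm, hnorm, hnorm] at hgap
  rw [hcross, hnorm, hnorm] at hangle
  simp only [smul_eq_mul, Real.norm_eq_abs, sq_abs] at hgap ⊢
  nlinarith [mul_le_mul_of_nonneg_left hangle (mul_nonneg ha hb)]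

theorem StrongConvexOn.mul_sub_mul_sub_le_of_abs_sub_le {s : Set ℝ} {m c d ε : ℝ}
    {f : ℝ → ℝ} (hf : StrongConvexOn s m f) {p q r : ℝ} (hp : p ∈ s) (hr : r ∈ s)
    (hpq : p < q) (hqr : q < r) (hfp : |f p - (c * p + d)| ≤ ε)
    (hfq : |f q - (c * q + d)| ≤ ε) (hfr : |f r - (c * r + d)| ≤ ε) :
    m / 2 * ((r - q) * (q - p)) ≤ 2 * ε := by
  have hrp : r - p ≠ 0 := by linarith
  set a := (r - q) / (r - p) with ha_def
  set b := (q - p) / (r - p) with hb_def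
  have ha : 0 ≤ a := div_nonneg (by linarith) (by linarith)
  have hb : 0 ≤ b := div_nonneg (by linarith) (by linarith)
  have hab : a + b = 1 := by rw [ha_def, hb_def]; field_simp; ring
  have hq : a * p + b * r = q := by rw [ha_def, hb_def]; field_simp; ring
  have hweight : a * b * (p - r) ^ 2 = (r - q) * (q - p) := by
    rw [ha_def, hb_def]; field_simp; ring
  have hconv := hf.2 hp hr ha hb hab
  simp only [smul_eq_mul, hq, Real.norm_eq_abs, sq_abs] at hconv
  have haffine : a * (c * p + d) + b * (c * r + d) = c * q + d := by
    rw [← hq]; linear_combination d * hab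
  rw [abs_le] at hfp hfq hfr
  linear_combination -(m / 2) * hweight + hconv + mul_le_mul_of_nonneg_left hfp.2 ha
    + mul_le_mul_of_nonneg_left hfr.2 hb + hfq.1 + haffine + ε * hab

theorem Real.volume_le_of_forall_mul_sub_mul_sub_le_sq {S : Set ℝ} (hS : IsCompact S) {δ : ℝ}
    (hδ : 0 ≤ δ) (h : ∀ p ∈ S, ∀ q ∈ S, ∀ r ∈ S, p < q → q < r → (r - q) * (q - p) ≤ δ ^ 2) :
    volume S ≤ ENNReal.ofReal (2 * δ) := by
  rcases S.eq_empty_or_nonempty with rfl | hne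
  · simp
  set i := sInf S
  set s := sSup S
  have hcover : S ⊆ Icc i (i + δ) ∪ Icc (s - δ) s := by
    intro q hq
    have hiq : i ≤ q := csInf_le hS.bddBelow hq
    have hqs : q ≤ s := le_csSup hS.bddAbove hq
    refine (le_or_gt (q - i) δ).imp (fun hleft ↦ ⟨hiq, by linarith⟩) fun hleft ↦ ⟨?_, hqs⟩
    by_contra! hright
    have := h i (hS.sInf_mem hne) q hq s (hS.sSup_mem hne) (by linarith) (by linarith)
    nlinarith
  calc volume S ≤ volume (Icc i (i + δ) ∪ Icc (s - δ) s) := measure_mono hcover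
    _ ≤ volume (Icc i (i + δ)) + volume (Icc (s - δ) s) := measure_union_le _ _
    _ = ENNReal.ofReal (2 * δ) := by
      rw [Real.volume_Icc, Real.volume_Icc, add_sub_cancel_left, sub_sub_cancel,
        ← ENNReal.ofReal_add hδ hδ, two_mul]

theorem omega_affine_approx_measure_bound_general (a b ε : ℝ) :
    MeasureTheory.volume
      {p ∈ Set.Icc (1/2 : ℝ) 1 |
        |(a * p + b) - (1/2 + (1/2) * Real.sqrt (p^2 + (1-p)^2))| ≤ ε}
      ≤ ENNReal.ofReal (16 * Real.sqrt ε * (1/2)) := by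
  have hrescale {x : ℝ} (hx : |(a * x + b) - (1/2 + (1/2) * √(x ^ 2 + (1 - x) ^ 2))| ≤ ε) :
      |√(x ^ 2 + (1 - x) ^ 2) - (2 * a * x + (2 * b - 1))| ≤ 2 * ε := by
    rw [abs_le] at hx ⊢
    constructor <;> linarith
  refine (Real.volume_le_of_forall_mul_sub_mul_sub_le_sq
    (isCompact_Icc.inter_right (t := {p | _ ≤ ε}) (isClosed_le (by fun_prop) continuous_const))
    (sqrt_nonneg (8 * ε)) ?_).trans ?_
  · rintro p ⟨hp, hpε⟩ q ⟨-, hqε⟩ r ⟨hr, hrε⟩ hpq hqr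
    have hsub : Icc (1/2 : ℝ) 1 ⊆ Icc 0 1 := Icc_subset_Icc (by norm_num) le_rfl
    have hthree := strongConvexOn_sqrt_sq_add_one_sub_sq.mul_sub_mul_sub_le_of_abs_sub_le
      (hsub hp) (hsub hr) hpq hqr (hrescale hpε) (hrescale hqε) (hrescale hrε)
    have hε : 0 ≤ ε := (abs_nonneg _).trans (mem_ofPred.1 hpε)
    rw [sq_sqrt (by positivity)]
    linarith
  · refine ENNReal.ofReal_le_ofReal ?_
    have h8 : √8 ≤ 4 := (sqrt_le_left (by norm_num)).2 (by norm_num)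
    rw [sqrt_mul (by norm_num)]
    nlinarith [sqrt_nonneg ε]

theorem omega_affine_approx_measure_bound (a b ε : ℝ) (hε : 0 < ε) :
    MeasureTheory.volume
      {p ∈ Set.Icc (1/2 : ℝ) 1 |
        |(a * p + b) - (1/2 + (1/2) * Real.sqrt (p^2 + (1-p)^2))| ≤ ε}
      ≤ ENNReal.ofReal (16 * Real.sqrt ε * (1/2)) :=
  omega_affine_approx_measure_bound_general a b ε
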